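/- For $c_0 > -1$, $\mu > 0$, $\nu = \pi/(2\mu)$, $j \in \mathbb{Z}$ and $\ell \in \mathbb{N}$, set $H_{\ell,j}(z_1,z_2) = F_{c_0 + \nu\ell + i(j+1)/2,\, j}(z_1,z_2)$ on the truncated worm $\mathcal{W}'_\mu$. Then each of the two families $\{H_{2k,j} : j \in \mathbb{Z}, k \in \mathbb{N}\}$ and $\{H_{2k+1,j} : j \in \mathbb{Z}, k \in \mathbb{N}\}$ is an orthogonal system in $A^2(\mathcal{W}'_\mu)$. -/

import Mathlib

open MeasureTheory Complex Real

/-- The truncated worm domain `𝒲'_μ`. -/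
def truncatedWorm (μ : ℝ) : Set (ℂ × ℂ) :=
  {z : ℂ × ℂ | z.2 ≠ 0 ∧
    ‖z.1 - Complex.exp (Complex.I * (Real.log (‖z.2‖ ^ 2) : ℂ))‖ ^ 2 < 1 ∧
    |Real.log (‖z.2‖ ^ 2)| < μ}

/-- The functions `F_{α,j}(z₁,z₂) = (z₁ e^{-i log|z₂|²})^α e^{iα log|z₂|²} z₂^j`. -/
noncomputable def Fworm (α : ℂ) (j : ℤ) (z : ℂ × ℂ) : ℂ :=
  (z.1 * Complex.exp (-Complex.I * (Real.log (‖z.2‖ ^ 2) : ℂ))) ^ α *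
    Complex.exp (Complex.I * α * (Real.log (‖z.2‖ ^ 2) : ℂ)) * z.2 ^ j

/-- `H_{ℓ,j} = F_{c₀ + νℓ + i(j+1)/2, j}` with `ν = π/(2μ)`. -/
noncomputable def Hworm (c₀ μ : ℝ) (ℓ : ℕ) (j : ℤ) : ℂ × ℂ → ℂ :=
  Fworm (((c₀ + (π / (2 * μ)) * ℓ : ℝ) : ℂ) + Complex.I * ((j : ℂ) + 1) / 2) j

/-!
Two symmetries of the worm do the work. Rotating `z₂` by a unit `c` preserves `𝒲'_μ` and
multiplies `F_{α,j} · conj F_{β,j'}` by `c ^ (j - j')`, so the integral vanishes when `j ≠ j'`.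
The maps `(z₁, z₂) ↦ (e^{iσ} z₁, e^{σ/2} z₂)` translate `t = log |z₂|²` by `σ` and, Jacobian `e^σ`
included, multiply `F_{α,j} · conj F_{β,j}` by `e^{σ (i (α - β̄) + j + 1)} = e^{2ikνσ}` when
`α - β̄ = 2kν + i(j+1)`. For `σ = μ/|k|` and `σ = μ/|k| - 2μ` this factor is `-1`, and these two
translations carry the pieces of `(-μ, μ)` cut at `μ - σ` onto the pieces cut at `σ - μ`
(swapped), so the integral over `𝒲'_μ` equals its own negative.
-/

open ComplexConjugate

theorem setIntegral_image_prodMap_mul {E : Type*} [NormedAddCommGroup E] [NormedSpace ℝ E]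
    {a b : ℂ} (ha : a ≠ 0) (hb : b ≠ 0) {A : Set (ℂ × ℂ)} (hA : MeasurableSet A)
    (g : ℂ × ℂ → E) :
    ∫ z in Prod.map (a * ·) (b * ·) '' A, g z
      = (normSq a * normSq b) • ∫ z in A, g (a * z.1, b * z.2) := by
  let L : (ℂ × ℂ) →L[ℝ] ℂ × ℂ :=
    (ContinuousLinearMap.mul ℝ ℂ a).prodMap (ContinuousLinearMap.mul ℝ ℂ b)
  have hL : ⇑L = Prod.map (a * ·) (b * ·) := rfl
  have hinj : Set.InjOn L A := fun x _ y _ h =>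
    Prod.ext (mul_left_cancel₀ ha (congrArg Prod.fst h)) (mul_left_cancel₀ hb (congrArg Prod.snd h))
  have hdet : |L.det| = normSq a * normSq b := by
    rw [ContinuousLinearMap.det, ContinuousLinearMap.coe_prodMap, LinearMap.det_prodMap]
    change |Algebra.norm ℝ a * Algebra.norm ℝ b| = _
    rw [Algebra.norm_complex_apply, Algebra.norm_complex_apply]
    exact abs_of_nonneg (mul_nonneg (normSq_nonneg a) (normSq_nonneg b))
  have : (volume : Measure (ℂ × ℂ)).IsAddHaarMeasure := by
    rw [Measure.volume_eq_prod]; infer_instance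
  rw [← hL, integral_image_eq_integral_abs_det_fderiv_smul volume hA
    (fun x _ => L.hasFDerivAt.hasFDerivWithinAt) hinj g, hdet, integral_smul]
  rfl

theorem Complex.exp_mul_pi_mul_I_of_odd {k : ℤ} (hk : Odd k) : cexp (k * π * I) = -1 := by
  obtain ⟨n, rfl⟩ := hk
  rw [show ((2 * n + 1 : ℤ) : ℂ) * π * I = n * (2 * π * I) + π * I by push_cast; ring,
    Complex.exp_add, Complex.exp_int_mul_two_pi_mul_I, Complex.exp_pi_mul_I, one_mul]

theorem cexp_mul_I_mul_pi_div_eq_neg_one {μ σ : ℝ} (hμ : μ ≠ 0) {m : ℤ} (hm : m ≠ 0)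
    (hσ : ∃ n : ℤ, σ = μ / |(m : ℝ)| + 2 * μ * n) :
    cexp (σ * (I * (2 * m * (π / (2 * μ))))) = -1 := by
  obtain ⟨n, rfl⟩ := hσ
  have hm' : (m : ℝ) ≠ 0 := Int.cast_ne_zero.2 hm
  obtain ⟨k, hk, hmk⟩ : ∃ k : ℤ, Odd k ∧ (m : ℝ) / |(m : ℝ)| + 2 * n * m = k := by
    rcases hm.lt_or_gt with hneg | hpos
    · refine ⟨-1 + 2 * (n * m), by simp [parity_simps], ?_⟩
      rw [abs_of_neg (Int.cast_lt_zero.2 hneg), div_neg, div_self hm']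
      push_cast; ring
    · refine ⟨1 + 2 * (n * m), by simp [parity_simps], ?_⟩
      rw [abs_of_pos (Int.cast_pos.2 hpos), div_self hm']
      push_cast; ring
  have hreal : (μ / |(m : ℝ)| + 2 * μ * n) * (2 * m * (π / (2 * μ))) = k * π := by
    rw [← hmk]
    field_simp
  rw [← Complex.exp_mul_pi_mul_I_of_odd hk,
    show (k : ℂ) * π * I = ((k * π : ℝ) : ℂ) * I by push_cast; ring, ← hreal]
  congr 1
  push_cast
  ring

theorem volume_setOf_norm_snd_eq (r : ℝ) : volume {z : ℂ × ℂ | ‖z.2‖ = r} = 0 := by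
  have : {z : ℂ × ℂ | ‖z.2‖ = r} = Set.univ ×ˢ Metric.sphere (0 : ℂ) r := by
    ext z
    simp
  rw [this, Measure.volume_eq_prod, Measure.prod_prod, Measure.addHaar_sphere, mul_zero]

noncomputable def wormLog (z : ℂ × ℂ) : ℝ := Real.log (‖z.2‖ ^ 2)

def wormSlab (a b : ℝ) : Set (ℂ × ℂ) :=
  {z | z.2 ≠ 0 ∧ ‖z.1 - cexp (I * wormLog z)‖ ^ 2 < 1 ∧ wormLog z ∈ Set.Ioo a b}

theorem truncatedWorm_eq_wormSlab (μ : ℝ) : truncatedWorm μ = wormSlab (-μ) μ := by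
  ext z
  simp only [truncatedWorm, wormSlab, wormLog, Set.mem_Ioo, abs_lt]

theorem measurableSet_wormSlab (a b : ℝ) : MeasurableSet (wormSlab a b) := by
  have hlog : Measurable wormLog := by unfold wormLog; fun_prop
  refine (measurableSet_eq_fun measurable_snd measurable_const).compl.inter
    ((measurableSet_lt (f := fun z : ℂ × ℂ => ‖z.1 - cexp (I * wormLog z)‖ ^ 2)
      (by fun_prop) measurable_const).inter (hlog measurableSet_Ioo))

theorem wormSlab_mono {a b a' b' : ℝ} (ha : a' ≤ a) (hb : b ≤ b') :
    wormSlab a b ⊆ wormSlab a' b' := fun _ ⟨hz, hdisc, hlog⟩ =>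
  ⟨hz, hdisc, Set.Ioo_subset_Ioo ha hb hlog⟩

theorem wormLog_eq_iff {z : ℂ × ℂ} (hz : z.2 ≠ 0) (c : ℝ) :
    wormLog z = c ↔ ‖z.2‖ = Real.exp (c / 2) := by
  constructor
  · rintro rfl
    rw [wormLog, Real.log_pow, Nat.cast_ofNat, mul_div_cancel_left₀ _ two_ne_zero,
      Real.exp_log (norm_pos_iff.2 hz)]
  · intro h
    rw [wormLog, h, Real.log_pow, Real.log_exp]
    ring

theorem wormSlab_union_ae_eq {a b c : ℝ} (hac : a < c) (hcb : c < b) :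
    (wormSlab a c ∪ wormSlab c b : Set (ℂ × ℂ)) =ᵐ[volume] wormSlab a b := by
  refine Filter.eventuallyEq_set.2 ?_
  filter_upwards [measure_eq_zero_iff_ae_notMem.1 (volume_setOf_norm_snd_eq (Real.exp (c / 2)))]
    with z hz
  simp only [wormSlab, Set.mem_union, Set.mem_ofPred_eq, Set.mem_Ioo]
  constructor
  · rintro (⟨h0, hdisc, ha, hc⟩ | ⟨h0, hdisc, hc, hb⟩)
    exacts [⟨h0, hdisc, ha, hc.trans hcb⟩, ⟨h0, hdisc, hac.trans hc, hb⟩]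
  · rintro ⟨h0, hdisc, ha, hb⟩
    have hne : wormLog z ≠ c := fun h => hz ((wormLog_eq_iff h0 c).1 h)
    rcases hne.lt_or_gt with hc | hc
    exacts [Or.inl ⟨h0, hdisc, ha, hc⟩, Or.inr ⟨h0, hdisc, hc, hb⟩]

theorem setIntegral_wormSlab_split {E : Type*} [NormedAddCommGroup E] [NormedSpace ℝ E]
    {f : ℂ × ℂ → E} {a b c : ℝ} (hf : IntegrableOn f (wormSlab a b)) (hac : a < c) (hcb : c < b) :
    ∫ z in wormSlab a b, f z = (∫ z in wormSlab a c, f z) + ∫ z in wormSlab c b, f z := by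
  have hdisj : Disjoint (wormSlab a c) (wormSlab c b) :=
    Set.disjoint_left.2 fun _ h h' => lt_asymm h.2.2.2 h'.2.2.1
  rw [← setIntegral_congr_set (wormSlab_union_ae_eq hac hcb),
    setIntegral_union hdisj (measurableSet_wormSlab c b)
      (hf.mono_set (wormSlab_mono le_rfl hcb.le)) (hf.mono_set (wormSlab_mono hac.le le_rfl))]

noncomputable def wormShift (σ : ℝ) : ℂ × ℂ → ℂ × ℂ :=
  Prod.map (cexp (σ * I) * ·) ((Real.exp (σ / 2) : ℂ) * ·)

theorem wormShift_add (σ τ : ℝ) (z : ℂ × ℂ) :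
    wormShift σ (wormShift τ z) = wormShift (σ + τ) z := by
  simp only [wormShift, Prod.map, ← mul_assoc, ← Complex.exp_add, ← Complex.ofReal_mul,
    ← Real.exp_add]
  push_cast
  ring_nf

theorem wormShift_zero (z : ℂ × ℂ) : wormShift 0 z = z := by
  simp [wormShift]

theorem wormLog_wormShift (σ : ℝ) {z : ℂ × ℂ} (hz : z.2 ≠ 0) :
    wormLog (wormShift σ z) = wormLog z + σ := by
  rw [wormLog, wormLog, wormShift, Prod.map_snd, norm_mul, mul_pow, Complex.norm_real,
    Real.norm_of_nonneg (Real.exp_pos _).le, ← Real.exp_nat_mul,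
    Real.log_mul (Real.exp_ne_zero _) (pow_ne_zero 2 (norm_ne_zero_iff.2 hz)), Real.log_exp]
  ring

theorem preimage_wormShift_wormSlab (σ a b : ℝ) :
    wormShift σ ⁻¹' wormSlab a b = wormSlab (a - σ) (b - σ) := by
  ext z
  by_cases hz : z.2 = 0
  · simp [wormSlab, wormShift, hz]
  have hdisc : (wormShift σ z).1 - cexp (I * (wormLog z + σ : ℝ))
      = cexp (σ * I) * (z.1 - cexp (I * wormLog z)) := by
    rw [wormShift, Prod.map_fst, mul_sub, ← Complex.exp_add]
    push_cast
    ring_nf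
  have hsnd : (wormShift σ z).2 ≠ 0 := mul_ne_zero (by exact_mod_cast (Real.exp_pos _).ne') hz
  simp only [wormSlab, Set.mem_preimage, Set.mem_ofPred_eq, Set.mem_Ioo]
  rw [wormLog_wormShift σ hz, hdisc, norm_mul, norm_exp_ofReal_mul_I, one_mul]
  simp only [hsnd, hz, ne_eq, not_false_eq_true, true_and, sub_lt_iff_lt_add, lt_sub_iff_add_lt]

theorem image_wormShift_wormSlab (σ a b : ℝ) :
    wormShift σ '' wormSlab a b = wormSlab (a + σ) (b + σ) := by
  rw [Set.image_eq_preimage_of_inverse (f := wormShift σ) (g := wormShift (-σ))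
    (fun z => by rw [wormShift_add, neg_add_cancel, wormShift_zero])
    (fun z => by rw [wormShift_add, add_neg_cancel, wormShift_zero]),
    preimage_wormShift_wormSlab, sub_neg_eq_add, sub_neg_eq_add]

theorem Fworm_wormShift (α : ℂ) (j : ℤ) (σ : ℝ) {z : ℂ × ℂ} (hz : z.2 ≠ 0) :
    Fworm α j (wormShift σ z) = cexp (σ * (I * α + j / 2)) * Fworm α j z := by
  have hlog : Real.log (‖(wormShift σ z).2‖ ^ 2) = Real.log (‖z.2‖ ^ 2) + σ :=
    wormLog_wormShift σ hz
  have hbase : (wormShift σ z).1 * cexp (-I * (Real.log (‖z.2‖ ^ 2) + σ : ℝ))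
      = z.1 * cexp (-I * (Real.log (‖z.2‖ ^ 2) : ℝ)) := by
    rw [wormShift, Prod.map_fst, mul_comm (cexp _) z.1, mul_assoc, ← Complex.exp_add]
    push_cast
    ring_nf
  have hscale : ((Real.exp (σ / 2) : ℂ) * z.2) ^ j = cexp (j * (σ / 2)) * z.2 ^ j := by
    rw [mul_zpow, Complex.ofReal_exp, Complex.exp_int_mul, Complex.ofReal_div, Complex.ofReal_ofNat]
  rw [Fworm, Fworm, hlog, hbase]
  change _ * cexp _ * ((Real.exp (σ / 2) : ℂ) * z.2) ^ j = _
  rw [hscale, mul_comm (cexp (_ * _)) (z.2 ^ j)]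
  have hexp : cexp (I * α * (Real.log (‖z.2‖ ^ 2) + σ : ℝ)) * cexp (j * (σ / 2))
      = cexp (σ * (I * α + j / 2)) * cexp (I * α * (Real.log (‖z.2‖ ^ 2) : ℝ)) := by
    rw [← Complex.exp_add, ← Complex.exp_add]
    push_cast
    ring_nf
  linear_combination ((z.1 * cexp (-I * (Real.log (‖z.2‖ ^ 2) : ℝ))) ^ α * z.2 ^ j) * hexp

theorem setIntegral_wormSlab_add (α β : ℂ) (j : ℤ) (a b σ : ℝ) :
    ∫ z in wormSlab (a + σ) (b + σ), Fworm α j z * conj (Fworm β j z)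
      = cexp (σ * (I * (α - conj β) + j + 1)) *
          ∫ z in wormSlab a b, Fworm α j z * conj (Fworm β j z) := by
  have hjac : normSq (cexp (σ * I)) * normSq (Real.exp (σ / 2) : ℂ) = Real.exp σ := by
    rw [normSq_eq_norm_sq, norm_exp_ofReal_mul_I, normSq_ofReal, ← Real.exp_add, add_halves,
      one_pow, one_mul]
  rw [← image_wormShift_wormSlab, wormShift,
    setIntegral_image_prodMap_mul (Complex.exp_ne_zero _)
      (Complex.ofReal_ne_zero.2 (Real.exp_pos _).ne') (measurableSet_wormSlab a b),
    hjac, Complex.real_smul, ← integral_const_mul, ← integral_const_mul]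
  refine setIntegral_congr_fun (measurableSet_wormSlab a b) fun z hz => ?_
  change (Real.exp σ : ℂ) * (Fworm α j (wormShift σ z) * conj (Fworm β j (wormShift σ z))) = _
  rw [Fworm_wormShift α j σ hz.1, Fworm_wormShift β j σ hz.1, map_mul, Complex.ofReal_exp]
  have hexp : cexp σ * (cexp (σ * (I * α + j / 2)) * conj (cexp (σ * (I * β + j / 2))))
      = cexp (σ * (I * (α - conj β) + j + 1)) := by
    simp only [map_mul, map_add, map_div₀, Complex.conj_ofReal, Complex.conj_I, map_intCast,
      map_ofNat, ← Complex.exp_conj, ← Complex.exp_add]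
    ring_nf
  linear_combination (Fworm α j z * conj (Fworm β j z)) * hexp

theorem integral_Fworm_mul_conj_eq_zero_of_sub_conj_eq {μ : ℝ} (hμ : 0 < μ) {α β : ℂ}
    {j m : ℤ} (hm : m ≠ 0) (h : α - conj β = 2 * m * (π / (2 * μ)) + I * (j + 1)) :
    ∫ z in truncatedWorm μ, Fworm α j z * conj (Fworm β j z) = 0 := by
  by_cases hf : IntegrableOn (fun z => Fworm α j z * conj (Fworm β j z)) (truncatedWorm μ)
  swap
  · exact integral_undef hf
  rw [truncatedWorm_eq_wormSlab] at hf ⊢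
  set s := μ / |(m : ℝ)|
  have hs : 0 < s ∧ s ≤ μ := by
    have hm1 : 1 ≤ |(m : ℝ)| := by exact_mod_cast Int.one_le_abs hm
    exact ⟨div_pos hμ (by linarith), div_le_self hμ.le hm1⟩
  have hfac : ∀ σ : ℝ, (∃ n : ℤ, σ = s + 2 * μ * n) →
      cexp (σ * (I * (α - conj β) + j + 1)) = -1 := by
    intro σ hσ
    rw [h, ← cexp_mul_I_mul_pi_div_eq_neg_one hμ.ne' hm hσ]
    congr 1
    linear_combination σ * (j + 1) * I_sq
  have hsplit₁ := setIntegral_wormSlab_split hf (c := μ - s) (by linarith) (by linarith)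
  have hsplit₂ := setIntegral_wormSlab_split hf (c := s - μ) (by linarith) (by linarith)
  have hshift₁ := setIntegral_wormSlab_add α β j (-μ) (μ - s) s
  have hshift₂ := setIntegral_wormSlab_add α β j (μ - s) μ (s - 2 * μ)
  rw [hfac s ⟨0, by simp⟩, neg_add_eq_sub, sub_add_cancel] at hshift₁
  rw [hfac (s - 2 * μ) ⟨-1, by push_cast; ring⟩, show μ - s + (s - 2 * μ) = -μ by ring,
    show μ + (s - 2 * μ) = s - μ by ring] at hshift₂
  linear_combination (hsplit₁ + hsplit₂ + hshift₁ + hshift₂) / 2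

theorem Fworm_rotate (α : ℂ) (j : ℤ) {c : ℂ} (hc : ‖c‖ = 1) (z : ℂ × ℂ) :
    Fworm α j (z.1, c * z.2) = c ^ j * Fworm α j z := by
  simp only [Fworm, norm_mul, hc, one_mul, mul_zpow]
  ring

theorem preimage_rotate_truncatedWorm {c : ℂ} (hc : ‖c‖ = 1) (μ : ℝ) :
    Prod.map (1 * ·) (c * ·) ⁻¹' truncatedWorm μ = truncatedWorm μ := by
  have hc0 : c ≠ 0 := norm_ne_zero_iff.1 (hc ▸ one_ne_zero)
  ext z
  simp [truncatedWorm, hc, hc0]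

theorem image_rotate_truncatedWorm {c : ℂ} (hc : ‖c‖ = 1) (μ : ℝ) :
    Prod.map (1 * ·) (c * ·) '' truncatedWorm μ = truncatedWorm μ := by
  have hc0 : c ≠ 0 := norm_ne_zero_iff.1 (hc ▸ one_ne_zero)
  rw [Set.image_eq_preimage_of_inverse (g := Prod.map (1 * ·) (c⁻¹ * ·))
    (fun z => Prod.ext (by simp) (by simp [hc0])) (fun z => Prod.ext (by simp) (by simp [hc0])),
    preimage_rotate_truncatedWorm (by rw [norm_inv, hc, inv_one])]

theorem integral_Fworm_mul_conj_eq_zpow_mul {c : ℂ} (hc : ‖c‖ = 1) (μ : ℝ) (α β : ℂ)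
    (j j' : ℤ) :
    ∫ z in truncatedWorm μ, Fworm α j z * conj (Fworm β j' z)
      = c ^ (j - j') * ∫ z in truncatedWorm μ, Fworm α j z * conj (Fworm β j' z) := by
  have hc0 : c ≠ 0 := norm_ne_zero_iff.1 (hc ▸ one_ne_zero)
  have hW : MeasurableSet (truncatedWorm μ) :=
    truncatedWorm_eq_wormSlab μ ▸ measurableSet_wormSlab (-μ) μ
  conv_lhs => rw [← image_rotate_truncatedWorm hc μ]
  rw [setIntegral_image_prodMap_mul one_ne_zero hc0 hW, normSq_one, normSq_eq_norm_sq, hc,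
    one_pow, one_mul, one_smul, ← integral_const_mul]
  refine setIntegral_congr_fun hW fun z _ => ?_
  simp only [one_mul, Fworm_rotate _ _ hc, map_mul, map_zpow₀,
    ← Complex.inv_eq_conj hc, inv_zpow', zpow_sub₀ hc0, zpow_neg]
  ring

theorem integral_Fworm_mul_conj_eq_zero_of_ne (μ : ℝ) (α β : ℂ) {j j' : ℤ} (h : j ≠ j') :
    ∫ z in truncatedWorm μ, Fworm α j z * conj (Fworm β j' z) = 0 := by
  have hn : ((j - j' : ℤ) : ℝ) ≠ 0 := Int.cast_ne_zero.2 (sub_ne_zero.2 h)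
  set c := cexp ((π / (j - j' : ℤ) : ℝ) * I)
  have hc : c ^ (j - j') = -1 := by
    rw [← Complex.exp_int_mul, ← Complex.exp_pi_mul_I, ← mul_assoc]
    congr 1
    rw [← Complex.ofReal_intCast, ← Complex.ofReal_mul, mul_div_cancel₀ _ hn]
  have hinv := integral_Fworm_mul_conj_eq_zpow_mul (c := c) (norm_exp_ofReal_mul_I _) μ α β j j'
  rw [hc] at hinv
  linear_combination hinv / 2

theorem integral_Hworm_mul_conj_eq_zero {μ : ℝ} (hμ : 0 < μ) (c₀ : ℝ) {ℓ ℓ' : ℕ} {j j' : ℤ}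
    (hℓ : Even ((ℓ : ℤ) - ℓ')) (hne : (ℓ, j) ≠ (ℓ', j')) :
    ∫ z in truncatedWorm μ, Hworm c₀ μ ℓ j z * conj (Hworm c₀ μ ℓ' j' z) = 0 := by
  rcases eq_or_ne j j' with rfl | hj
  · obtain ⟨m, hm⟩ := hℓ
    have hm0 : m ≠ 0 := by
      rintro rfl
      exact hne (by rw [show ℓ = ℓ' by omega])
    have hmC : (ℓ : ℂ) = ℓ' + 2 * m := by exact_mod_cast (by omega : (ℓ : ℤ) = ℓ' + 2 * m)
    refine integral_Fworm_mul_conj_eq_zero_of_sub_conj_eq hμ hm0 ?_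
    simp only [map_add, map_div₀, map_mul, Complex.conj_ofReal, Complex.conj_I, map_intCast,
      map_one, map_ofNat]
    push_cast
    rw [hmC]
    ring
  · exact integral_Fworm_mul_conj_eq_zero_of_ne μ _ _ hj

theorem Hworm_orthogonal_general (μ c₀ : ℝ) (hμ : 0 < μ) :
    (∀ (k k' : ℕ) (j j' : ℤ), (k, j) ≠ (k', j') →
      ∫ z in truncatedWorm μ,
        Hworm c₀ μ (2 * k) j z * (starRingEnd ℂ) (Hworm c₀ μ (2 * k') j' z) = 0) ∧
    (∀ (k k' : ℕ) (j j' : ℤ), (k, j) ≠ (k', j') →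
      ∫ z in truncatedWorm μ,
        Hworm c₀ μ (2 * k + 1) j z * (starRingEnd ℂ) (Hworm c₀ μ (2 * k' + 1) j' z) = 0) := by
  refine ⟨fun k k' j j' hne => ?_, fun k k' j j' hne => ?_⟩ <;>
  · refine integral_Hworm_mul_conj_eq_zero hμ c₀ ⟨k - k', by push_cast; ring⟩ ?_
    simp only [ne_eq, Prod.mk.injEq] at hne ⊢
    omega

/-- Each of the families `{H_{2k,j}}` and `{H_{2k+1,j}}` is an orthogonal system
in `A²(𝒲'_μ)`. -/
theorem Hworm_orthogonal (μ c₀ : ℝ) (hμ : 0 < μ) (hc₀ : -1 < c₀) :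
    (∀ (k k' : ℕ) (j j' : ℤ), (k, j) ≠ (k', j') →
      ∫ z in truncatedWorm μ,
        Hworm c₀ μ (2 * k) j z * (starRingEnd ℂ) (Hworm c₀ μ (2 * k') j' z) = 0) ∧
    (∀ (k k' : ℕ) (j j' : ℤ), (k, j) ≠ (k', j') →
      ∫ z in truncatedWorm μ,
        Hworm c₀ μ (2 * k + 1) j z * (starRingEnd ℂ) (Hworm c₀ μ (2 * k' + 1) j' z) = 0) :=
  Hworm_orthogonal_general μ c₀ hμ
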